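/- arXiv:0706.3116 — 5 statements merged into one kernel-verified Lean document; each statement's English description precedes it below -/
import Mathlib

section
/- Let G=(V,E) be a finite graph with |V| vertices and |E| edges. For integers i,j let b_{ij} be the number of T-joins (T,A) of G with |A| = i and |T| = j, and let a_{ij} be the number of subsets S ⊆ V with |[S,S̄]| = i and |S| = j. Then for all real numbers x and y, 2^{|V|} · Σ_{i,j} b_{ij} x^i y^j = Σ_{i,j} a_{ij} (1−x)^i (1+x)^{|E|−i} (1−y)^j (1+y)^{|V|−j}; equivalently, 2^{|V|} · Σ_{(T,A) T-join} x^{|A|} y^{|T|} = Σ_{S⊆V} (1−x)^{|[S,S̄]|} (1+x)^{|E|−|[S,S̄]|} (1−y)^{|S|} (1+y)^{|V|−|S|}. -/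
open Finset
open scoped Classical

variable {V : Type*} [Fintype V] [DecidableEq V]

/-- The cut `[S, S̄]`: the set of edges of `G` with one endpoint in `S` and the other
endpoint in `S̄ = V ∖ S`. -/
noncomputable def cutEdges (G : SimpleGraph V) [DecidableRel G.Adj] (S : Finset V) :
    Finset (Sym2 V) :=
  G.edgeFinset.filter fun e => (∃ a ∈ e, a ∈ S) ∧ (∃ a ∈ e, a ∉ S)

/-- A T-join `(T, A)` in `G`: `A ⊆ E`, every vertex of `T` is incident with an odd number
of edges of `A`, and every vertex outside `T` is incident with an even number of edges
of `A`. -/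
def IsTJoin (G : SimpleGraph V) [DecidableRel G.Adj] (T : Finset V)
    (A : Finset (Sym2 V)) : Prop :=
  A ⊆ G.edgeFinset ∧ ∀ v : V, v ∈ T ↔ Odd (A.filter fun e => v ∈ e).card

/-- The product of the spins at the two endpoints of an edge. -/
noncomputable def edgeProd (σ : V → ℤ) (e : Sym2 V) : ℤ :=
  Sym2.lift ⟨fun u w => σ u * σ w, fun _ _ => mul_comm _ _⟩ e

/-- The energy of `G` in state `σ`: `∑_{uv ∈ E} σ(u) σ(v)`. -/
noncomputable def energy (G : SimpleGraph V) [DecidableRel G.Adj] (σ : V → ℤ) : ℤ :=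
  ∑ e ∈ G.edgeFinset, edgeProd σ e

/-- The magnetization of a state: `∑_{v ∈ V} σ(v)`. -/
noncomputable def magnet (σ : V → ℤ) : ℤ := ∑ v : V, σ v

/-- The number of even subgraphs of `G` (edge sets in which every vertex has even degree)
with exactly `i` edges. -/
noncomputable def evenCount (G : SimpleGraph V) [DecidableRel G.Adj] (i : ℕ) : ℕ :=
  (G.edgeFinset.powerset.filter fun A =>
      A.card = i ∧ ∀ v : V, Even (A.filter fun e => v ∈ e).card).card

/-- spin of a vertex -/
noncomputable def sgn (S : Finset V) (v : V) : ℝ := if v ∈ S then -1 else 1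

/-- product of spins over an edge -/
noncomputable def edgeSgn (S : Finset V) (e : Sym2 V) : ℝ :=
  Sym2.lift ⟨fun u w => sgn S u * sgn S w, fun _ _ => mul_comm _ _⟩ e

lemma edgeSgn_eq (G : SimpleGraph V) [DecidableRel G.Adj] (S : Finset V) {e : Sym2 V}
    (he : e ∈ G.edgeFinset) :
    edgeSgn S e = if e ∈ cutEdges G S then (-1 : ℝ) else 1 := by
  induction e using Sym2.ind with
  | _ u w =>
    by_cases hu : u ∈ S <;> by_cases hw : w ∈ S <;>
      simp [edgeSgn, sgn, cutEdges, he, hu, hw]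

lemma vertex_expand (S : Finset V) (y : ℝ) :
    (1 - y) ^ S.card * (1 + y) ^ (Fintype.card V - S.card)
      = ∑ T : Finset V, y ^ T.card * ∏ v ∈ T, sgn S v := by
  have key : ∏ v : V, (y * sgn S v + 1)
      = (1 - y) ^ S.card * (1 + y) ^ (Fintype.card V - S.card) := by
    rw [← Finset.prod_filter_mul_prod_filter_not univ (· ∈ S)]
    have h1 : univ.filter (· ∈ S) = S := by ext v; simp
    have h2 : univ.filter (fun v => ¬ v ∈ S) = Sᶜ := by ext v; simp
    rw [h1, h2]
    rw [Finset.prod_congr rfl (fun v hv => by simp [sgn, hv]; ring : ∀ v ∈ S, y * sgn S v + 1 = 1 - y)]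
    rw [Finset.prod_congr rfl (fun v hv => by
      simp only [Finset.mem_compl] at hv; simp [sgn, hv]; ring : ∀ v ∈ Sᶜ, y * sgn S v + 1 = 1 + y)]
    rw [Finset.prod_const, Finset.prod_const, Finset.card_compl]
  rw [← key, Finset.prod_add]
  rw [Finset.powerset_univ]
  refine Finset.sum_congr rfl fun T _ => ?_
  simp [Finset.prod_mul_distrib, mul_comm]

lemma edge_expand (G : SimpleGraph V) [DecidableRel G.Adj] (S : Finset V) (x : ℝ) :
    (1 - x) ^ (cutEdges G S).card * (1 + x) ^ (G.edgeFinset.card - (cutEdges G S).card)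
      = ∑ A ∈ G.edgeFinset.powerset, x ^ A.card * ∏ e ∈ A, edgeSgn S e := by
  have hsub : cutEdges G S ⊆ G.edgeFinset := Finset.filter_subset _ _
  have key : ∏ e ∈ G.edgeFinset, (x * edgeSgn S e + 1)
      = (1 - x) ^ (cutEdges G S).card * (1 + x) ^ (G.edgeFinset.card - (cutEdges G S).card) := by
    rw [← Finset.prod_filter_mul_prod_filter_not G.edgeFinset (· ∈ cutEdges G S)]
    have h1 : G.edgeFinset.filter (· ∈ cutEdges G S) = cutEdges G S := by
      ext e; simp only [Finset.mem_filter, and_iff_right_iff_imp]; exact fun h => hsub h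
    have h2 : G.edgeFinset.filter (fun e => ¬ e ∈ cutEdges G S) = G.edgeFinset \ cutEdges G S := by
      ext e; simp [Finset.mem_sdiff]
    rw [h1, h2]
    rw [Finset.prod_congr rfl (fun e he => by
      rw [edgeSgn_eq G S (hsub he), if_pos he]; ring :
      ∀ e ∈ cutEdges G S, x * edgeSgn S e + 1 = 1 - x)]
    rw [Finset.prod_congr rfl (fun e he => by
      rw [Finset.mem_sdiff] at he
      rw [edgeSgn_eq G S he.1, if_neg he.2]; ring :
      ∀ e ∈ G.edgeFinset \ cutEdges G S, x * edgeSgn S e + 1 = 1 + x)]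
    rw [Finset.prod_const, Finset.prod_const, Finset.card_sdiff_of_subset hsub]
  rw [← key, Finset.prod_add]
  refine Finset.sum_congr rfl fun A hA => ?_
  rw [Finset.mem_powerset] at hA
  simp [Finset.prod_mul_distrib, mul_comm]

lemma prod_edgeSgn (S : Finset V) (A : Finset (Sym2 V)) (hA : ∀ e ∈ A, ¬ e.IsDiag) :
    ∏ e ∈ A, edgeSgn S e = ∏ v : V, sgn S v ^ (A.filter fun e => v ∈ e).card := by
  induction A using Finset.induction with
  | empty => simp
  | @insert e A he ih =>
    obtain ⟨u, w⟩ := e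
    have hd : u ≠ w := by
      have := hA _ (Finset.mem_insert_self _ _)
      simpa [Sym2.mk_isDiag_iff] using this
    have ih' := ih fun f hf => hA f (Finset.mem_insert_of_mem hf)
    rw [Finset.prod_insert he, ih']
    have hfilter : ∀ v : V,
        ((insert s(u, w) A).filter fun e => v ∈ e).card
          = (A.filter fun e => v ∈ e).card + (if v ∈ s(u, w) then 1 else 0) := by
      intro v
      by_cases hv : v ∈ s(u, w)
      · rw [Finset.filter_insert, if_pos hv, Finset.card_insert_of_notMem (by
          simp only [Finset.mem_filter]; exact fun h => he h.1), if_pos hv]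
      · rw [Finset.filter_insert, if_neg hv, if_neg hv, add_zero]
    simp only [hfilter, pow_add]
    rw [Finset.prod_mul_distrib]
    have : ∏ v : V, sgn S v ^ (if v ∈ s(u, w) then 1 else 0)
        = edgeSgn S s(u, w) := by
      have h1 : ∀ v : V, sgn S v ^ (if v ∈ s(u, w) then 1 else 0)
          = (if v ∈ ({u, w} : Finset V) then sgn S v else 1) := by
        intro v
        by_cases hv : v ∈ ({u, w} : Finset V)
        · rw [if_pos (by simpa [Sym2.mem_iff] using hv), pow_one, if_pos hv]
        · rw [if_neg (by simpa [Sym2.mem_iff] using hv), pow_zero, if_neg hv]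
      rw [Finset.prod_congr rfl fun v _ => h1 v, ← Finset.prod_filter,
        (by ext v; simp : univ.filter (· ∈ ({u, w} : Finset V)) = {u, w}),
        Finset.prod_pair hd]
      simp [edgeSgn]
    rw [this]; ring

lemma sum_sgn_pow (m : V → ℕ) :
    ∑ S : Finset V, ∏ v : V, sgn S v ^ m v
      = if (∀ v, Even (m v)) then (2 : ℝ) ^ Fintype.card V else 0 := by
  have h1 : ∀ S : Finset V, ∏ v : V, sgn S v ^ m v = ∏ v ∈ S, (-1 : ℝ) ^ m v := by
    intro S
    have : ∀ v : V, sgn S v ^ m v = (if v ∈ S then (-1 : ℝ) ^ m v else 1) := by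
      intro v; by_cases hv : v ∈ S <;> simp [sgn, hv]
    rw [Finset.prod_congr rfl fun v _ => this v, ← Finset.prod_filter,
      (by ext v; simp : univ.filter (· ∈ S) = S)]
  simp only [h1]
  have h2 : ∑ S : Finset V, ∏ v ∈ S, (-1 : ℝ) ^ m v
      = ∏ v : V, ((-1 : ℝ) ^ m v + 1) := by
    rw [Finset.prod_add, Finset.powerset_univ]
    exact Finset.sum_congr rfl fun T _ => by simp
  rw [h2]
  by_cases h : ∀ v, Even (m v)
  · rw [if_pos h]
    rw [Finset.prod_congr rfl (fun v _ => by
      rw [Even.neg_one_pow (h v)] : ∀ v ∈ univ, ((-1:ℝ) ^ m v + 1) = 1 + 1)]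
    norm_num
  · rw [if_neg h]
    push_neg at h
    obtain ⟨v, hv⟩ := h
    exact Finset.prod_eq_zero (Finset.mem_univ v) (by
      rw [Odd.neg_one_pow (Nat.not_even_iff_odd.mp hv)]; ring)

lemma prod_sgn_T (S T : Finset V) :
    ∏ v ∈ T, sgn S v = ∏ v : V, sgn S v ^ (if v ∈ T then 1 else 0) := by
  rw [Finset.prod_congr rfl (fun v _ => by
    by_cases hv : v ∈ T <;> simp [hv] :
    ∀ v ∈ univ, sgn S v ^ (if v ∈ T then 1 else 0) = if v ∈ T then sgn S v else 1),
    ← Finset.prod_filter, (by ext v; simp : univ.filter (· ∈ T) = T)]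


lemma spin_inner_sum (G : SimpleGraph V) [DecidableRel G.Adj] (T : Finset V)
    {A : Finset (Sym2 V)} (hA : A ⊆ G.edgeFinset) :
    ∑ S : Finset V, (∏ e ∈ A, edgeSgn S e) * ∏ v ∈ T, sgn S v
      = if IsTJoin G T A then (2 : ℝ) ^ Fintype.card V else 0 := by
  have hdiag : ∀ e ∈ A, ¬ e.IsDiag := fun e he =>
    G.not_isDiag_of_mem_edgeSet (SimpleGraph.mem_edgeFinset.mp (hA he))
  have key : ∀ S : Finset V, (∏ e ∈ A, edgeSgn S e) * ∏ v ∈ T, sgn S v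
      = ∏ v : V, sgn S v ^ ((A.filter fun e => v ∈ e).card + (if v ∈ T then 1 else 0)) := by
    intro S
    rw [prod_edgeSgn S A hdiag, prod_sgn_T, ← Finset.prod_mul_distrib]
    exact Finset.prod_congr rfl fun v _ => (pow_add _ _ _).symm
  simp only [key]
  rw [sum_sgn_pow]
  congr 1
  simp only [eq_iff_iff]
  constructor
  · intro h
    refine ⟨hA, fun v => ?_⟩
    have hv := h v
    by_cases ht : v ∈ T
    · simp only [ht, if_pos, Nat.even_add_one] at hv
      simp [ht, Nat.not_even_iff_odd.mp (by simpa using hv)]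
    · simp only [ht, if_neg, add_zero] at hv
      simp [ht, Nat.not_odd_iff_even.mp (by simpa using hv)]
  · rintro ⟨-, h⟩ v
    by_cases ht : v ∈ T
    · have := (h v).mp ht
      simpa [ht, Nat.even_add_one, Nat.not_even_iff_odd] using this
    · have : ¬ Odd (A.filter fun e => v ∈ e).card := fun hc => ht ((h v).mpr hc)
      simpa [ht, Nat.not_odd_iff_even.mp this] using Nat.not_odd_iff_even.mp this


/-- `2^{|V|} · Σ_{(T,A) T-join} x^{|A|} y^{|T|}
  = Σ_{S ⊆ V} (1−x)^{|[S,S̄]|} (1+x)^{|E|−|[S,S̄]|} (1−y)^{|S|} (1+y)^{|V|−|S|}`. -/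
theorem tjoin_generating_function_eq_cut_sum (G : SimpleGraph V) [DecidableRel G.Adj]
    (x y : ℝ) :
    2 ^ Fintype.card V *
        ∑ p ∈ ((univ : Finset (Finset V)) ×ˢ G.edgeFinset.powerset).filter
            (fun p => IsTJoin G p.1 p.2),
          x ^ p.2.card * y ^ p.1.card
      = ∑ S : Finset V,
          (1 - x) ^ (cutEdges G S).card *
            (1 + x) ^ (G.edgeFinset.card - (cutEdges G S).card) *
            (1 - y) ^ S.card * (1 + y) ^ (Fintype.card V - S.card) := by
  have step1 : ∀ S : Finset V,
      (1 - x) ^ (cutEdges G S).card *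
            (1 + x) ^ (G.edgeFinset.card - (cutEdges G S).card) *
            (1 - y) ^ S.card * (1 + y) ^ (Fintype.card V - S.card)
      = ∑ T : Finset V, ∑ A ∈ G.edgeFinset.powerset,
          x ^ A.card * y ^ T.card *
            ((∏ e ∈ A, edgeSgn S e) * ∏ v ∈ T, sgn S v) := by
    intro S
    have : (1 - x) ^ (cutEdges G S).card *
            (1 + x) ^ (G.edgeFinset.card - (cutEdges G S).card) *
            (1 - y) ^ S.card * (1 + y) ^ (Fintype.card V - S.card)
        = ((1 - x) ^ (cutEdges G S).card *
            (1 + x) ^ (G.edgeFinset.card - (cutEdges G S).card)) *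
          ((1 - y) ^ S.card * (1 + y) ^ (Fintype.card V - S.card)) := by ring
    rw [this, edge_expand G S x, vertex_expand S y, Finset.sum_mul_sum,
      Finset.sum_comm]
    refine Finset.sum_congr rfl fun T _ => Finset.sum_congr rfl fun A _ => ?_
    ring
  calc 2 ^ Fintype.card V *
        ∑ p ∈ ((univ : Finset (Finset V)) ×ˢ G.edgeFinset.powerset).filter
            (fun p => IsTJoin G p.1 p.2),
          x ^ p.2.card * y ^ p.1.card
      = ∑ p ∈ (univ : Finset (Finset V)) ×ˢ G.edgeFinset.powerset,
          (if IsTJoin G p.1 p.2 then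
            (2 : ℝ) ^ Fintype.card V * (x ^ p.2.card * y ^ p.1.card) else 0) := by
        rw [Finset.mul_sum, Finset.sum_filter]
    _ = ∑ T : Finset V, ∑ A ∈ G.edgeFinset.powerset,
          x ^ A.card * y ^ T.card *
            (if IsTJoin G T A then (2 : ℝ) ^ Fintype.card V else 0) := by
        rw [Finset.sum_product]
        refine Finset.sum_congr rfl fun T _ => Finset.sum_congr rfl fun A _ => ?_
        by_cases h : IsTJoin G T A <;> simp [h] <;> ring
    _ = ∑ T : Finset V, ∑ A ∈ G.edgeFinset.powerset,
          x ^ A.card * y ^ T.card *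
            ∑ S : Finset V, (∏ e ∈ A, edgeSgn S e) * ∏ v ∈ T, sgn S v := by
        refine Finset.sum_congr rfl fun T _ => Finset.sum_congr rfl fun A hA => ?_
        rw [spin_inner_sum G T (Finset.mem_powerset.mp hA)]
    _ = ∑ T : Finset V, ∑ A ∈ G.edgeFinset.powerset, ∑ S : Finset V,
          x ^ A.card * y ^ T.card *
            ((∏ e ∈ A, edgeSgn S e) * ∏ v ∈ T, sgn S v) := by
        exact Finset.sum_congr rfl fun T _ => Finset.sum_congr rfl fun A _ =>
          Finset.mul_sum _ _ _
    _ = ∑ S : Finset V, ∑ T : Finset V, ∑ A ∈ G.edgeFinset.powerset,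
          x ^ A.card * y ^ T.card *
            ((∏ e ∈ A, edgeSgn S e) * ∏ v ∈ T, sgn S v) := by
        rw [Finset.sum_congr rfl fun T (_ : T ∈ univ) => Finset.sum_comm, Finset.sum_comm]
    _ = _ := by
        refine Finset.sum_congr rfl fun S _ => (step1 S).symm
end

section
/- Let G=(V,E) be a finite graph with |V| vertices and |E| edges. For integers i,j let a_{ij} be the number of subsets S ⊆ V with |[S,S̄]| = i and |S| = j, and let b_{ij} be the number of T-joins (T,A) of G with |A| = i and |T| = j. Then for all real numbers x and y, 2^{|E|} · Σ_{i,j} a_{ij} x^i y^j = Σ_{i,j} b_{ij} (1−x)^i (1+x)^{|E|−i} (1−y)^j (1+y)^{|V|−j}; equivalently, 2^{|E|} · Σ_{S⊆V} x^{|[S,S̄]|} y^{|S|} = Σ_{(T,A) T-join} (1−x)^{|A|} (1+x)^{|E|−|A|} (1−y)^{|T|} (1+y)^{|V|−|T|}. -/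
open Finset
open scoped Classical

variable {V : Type*} [Fintype V] [DecidableEq V]

/-!
Expanding `∏_{e ∈ E} ((1 + x) ± (1 - x))` gives, for every `C ⊆ E`,
`2^{|E|} x^{|C|} = Σ_{A ⊆ E} (-1)^{|C ∩ A|} (1-x)^{|A|} (1+x)^{|E|-|A|}`; apply this to each cut
`C = [S, S̄]` and exchange the sums. Counting the incidences between `S` and the edges of `A` shows
`|[S, S̄] ∩ A| ≡ |T_A ∩ S| (mod 2)`, where `T_A` is the set of odd-degree vertices of `A`, so the
inner sum `Σ_S (-1)^{|T_A ∩ S|} y^{|S|}` is the expansion of `(1-y)^{|T_A|} (1+y)^{|V|-|T_A|}`.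
Finally `A ↦ (T_A, A)` is a bijection from the edge sets onto the T-joins.
-/

section SignedExpansion

variable {α R : Type*} [DecidableEq α] [CommRing R]

lemma prod_ite_mem_of_subset {s t : Finset α} (h : t ⊆ s) (a b : R) :
    ∏ e ∈ s, (if e ∈ t then a else b) = a ^ t.card * b ^ (s.card - t.card) := by
  rw [prod_ite, prod_const, prod_const, filter_mem_eq_inter, inter_eq_right.mpr h,
    ← sdiff_eq_filter, card_sdiff_of_subset h]

lemma prod_ite_mem_neg_one (t u : Finset α) :
    ∏ e ∈ u, (if e ∈ t then (-1 : R) else 1) = (-1) ^ (t ∩ u).card := by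
  rw [prod_ite_mem, prod_const, inter_comm]

theorem one_sub_pow_mul_one_add_pow_eq_sum_powerset {s t : Finset α} (h : t ⊆ s) (x : R) :
    (1 - x) ^ t.card * (1 + x) ^ (s.card - t.card)
      = ∑ u ∈ s.powerset, (-1) ^ (t ∩ u).card * x ^ u.card := by
  calc (1 - x) ^ t.card * (1 + x) ^ (s.card - t.card)
      = ∏ e ∈ s, (1 + (if e ∈ t then -1 else 1) * x) := by
        rw [← prod_ite_mem_of_subset h]
        exact prod_congr rfl fun e _ => by split_ifs <;> ring
    _ = ∑ u ∈ s.powerset, (-1) ^ (t ∩ u).card * x ^ u.card := by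
        rw [prod_one_add]
        exact sum_congr rfl fun u _ => by rw [prod_mul_distrib, prod_ite_mem_neg_one, prod_const]

theorem sum_powerset_neg_one_pow_mul_one_sub_pow_mul_one_add_pow {s C : Finset α} (h : C ⊆ s)
    (x : R) :
    ∑ A ∈ s.powerset, (-1) ^ (C ∩ A).card * ((1 - x) ^ A.card * (1 + x) ^ (s.card - A.card))
      = 2 ^ s.card * x ^ C.card := by
  calc ∑ A ∈ s.powerset, (-1) ^ (C ∩ A).card * ((1 - x) ^ A.card * (1 + x) ^ (s.card - A.card))
      = ∏ e ∈ s, ((if e ∈ C then -1 else 1) * (1 - x) + (1 + x)) := by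
        rw [prod_add]
        refine sum_congr rfl fun A hA => ?_
        rw [prod_mul_distrib, prod_ite_mem_neg_one, prod_const, prod_const,
          card_sdiff_of_subset (mem_powerset.mp hA), mul_assoc]
    _ = ∏ e ∈ s, (if e ∈ C then 2 * x else 2) :=
        prod_congr rfl fun e _ => by split_ifs <;> ring
    _ = 2 ^ s.card * x ^ C.card := by
        rw [prod_ite_mem_of_subset h, mul_pow, mul_right_comm, ← pow_add,
          Nat.add_sub_cancel' (card_le_card h)]

end SignedExpansion

section TJoin

variable (G : SimpleGraph V) [DecidableRel G.Adj]

def oddDegreeVertices (A : Finset (Sym2 V)) : Finset V :=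
  univ.filter fun v => Odd (A.filter fun e => v ∈ e).card

lemma isTJoin_iff {T : Finset V} {A : Finset (Sym2 V)} :
    IsTJoin G T A ↔ A ⊆ G.edgeFinset ∧ T = oddDegreeVertices A := by
  simp [IsTJoin, oddDegreeVertices, Finset.ext_iff]

lemma sum_isTJoin_eq_sum_powerset {M : Type*} [AddCommMonoid M]
    (f : Finset V × Finset (Sym2 V) → M) :
    ∑ p ∈ (univ ×ˢ G.edgeFinset.powerset).filter (fun p => IsTJoin G p.1 p.2), f p
      = ∑ A ∈ G.edgeFinset.powerset, f (oddDegreeVertices A, A) := by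
  rw [sum_filter, sum_product_right]
  refine sum_congr rfl fun A hA => ?_
  simp [isTJoin_iff, mem_powerset.mp hA]

lemma mem_cutEdges_iff_odd {S : Finset V} {e : Sym2 V} (he : e ∈ G.edgeFinset) :
    e ∈ cutEdges G S ↔ Odd (S.filter (· ∈ e)).card := by
  induction e using Sym2.ind with
  | _ u w =>
    have huw : u ≠ w := (SimpleGraph.mem_edgeFinset.mp he).ne
    have hfilter : S.filter (· ∈ s(u, w)) = ({u, w} : Finset V).filter (· ∈ S) := by
      ext v
      simp only [mem_filter, Sym2.mem_iff, mem_insert, mem_singleton]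
      tauto
    rw [hfilter]
    by_cases hu : u ∈ S <;> by_cases hw : w ∈ S <;>
      simp [cutEdges, he, filter_insert, filter_singleton, hu, hw, huw, Nat.odd_iff]

lemma even_card_cutEdges_inter_iff {A : Finset (Sym2 V)} (hA : A ⊆ G.edgeFinset)
    (S : Finset V) :
    Even (cutEdges G S ∩ A).card ↔ Even (oddDegreeVertices A ∩ S).card := by
  have hcut : cutEdges G S ∩ A = A.filter fun e => Odd (S.filter (· ∈ e)).card := by
    ext e
    rw [mem_inter, mem_filter, and_comm]
    exact and_congr_right fun he => mem_cutEdges_iff_odd G (hA he)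
  have hodd : oddDegreeVertices A ∩ S = S.filter fun v => Odd (A.filter fun e => v ∈ e).card := by
    rw [oddDegreeVertices, inter_comm, inter_filter, inter_univ]
  -- both sides are the parity of the number of incidences between `S` and `A`
  rw [hcut, hodd, ← even_sum_iff_even_card_odd, ← even_sum_iff_even_card_odd]
  simp_rw [card_filter]
  rw [sum_comm]

end TJoin

/-- `2^{|E|} · Σ_{S ⊆ V} x^{|[S,S̄]|} y^{|S|}
  = Σ_{(T,A) T-join} (1−x)^{|A|} (1+x)^{|E|−|A|} (1−y)^{|T|} (1+y)^{|V|−|T|}`. -/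
theorem cut_generating_function_eq_tjoin_sum (G : SimpleGraph V) [DecidableRel G.Adj]
    (x y : ℝ) :
    2 ^ G.edgeFinset.card *
        ∑ S : Finset V, x ^ (cutEdges G S).card * y ^ S.card
      = ∑ p ∈ ((univ : Finset (Finset V)) ×ˢ G.edgeFinset.powerset).filter
            (fun p => IsTJoin G p.1 p.2),
          (1 - x) ^ p.2.card * (1 + x) ^ (G.edgeFinset.card - p.2.card) *
            (1 - y) ^ p.1.card * (1 + y) ^ (Fintype.card V - p.1.card) := by
  set E := G.edgeFinset
  calc 2 ^ E.card * ∑ S : Finset V, x ^ (cutEdges G S).card * y ^ S.card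
      = ∑ S : Finset V, y ^ S.card * ∑ A ∈ E.powerset,
          (-1) ^ (cutEdges G S ∩ A).card * ((1 - x) ^ A.card * (1 + x) ^ (E.card - A.card)) := by
        rw [mul_sum]
        refine sum_congr rfl fun S _ => ?_
        rw [sum_powerset_neg_one_pow_mul_one_sub_pow_mul_one_add_pow
          (C := cutEdges G S) (filter_subset _ _)]
        ring
    _ = ∑ A ∈ E.powerset, (1 - x) ^ A.card * (1 + x) ^ (E.card - A.card) *
          ∑ S : Finset V, (-1) ^ (oddDegreeVertices A ∩ S).card * y ^ S.card := by
        simp_rw [mul_sum]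
        rw [sum_comm]
        refine sum_congr rfl fun A hA => sum_congr rfl fun S _ => ?_
        rw [neg_one_pow_congr (even_card_cutEdges_inter_iff G (mem_powerset.mp hA) S)]
        ring
    _ = _ := by
        rw [sum_isTJoin_eq_sum_powerset]
        refine sum_congr rfl fun A _ => ?_
        rw [← powerset_univ, ← one_sub_pow_mul_one_add_pow_eq_sum_powerset (subset_univ _),
          card_univ]
        ring
end

section
/- (van der Waerden identity) Let G=(V,E) be a finite graph with n = |V| vertices and m = |E| edges, and for each integer i ≥ 0 let b_i be the number of even subgraphs of G with exactly i edges. Then for every real number K, Σ_{σ: V→{±1}} exp(K · Σ_{uv∈E} σ(u)σ(v)) = 2^n (cosh K)^m · Σ_i b_i (tanh K)^i. -/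
open Finset
open scoped Classical

variable {V : Type*} [Fintype V] [DecidableEq V]

/-!
Write `t = tanh K`. For a spin product `p = ±1` one has `exp (K p) = cosh K (1 + p t)`, so
expanding `∏_{e ∈ E} (1 + p_e t)` turns each Boltzmann weight into
`(cosh K)^m ∑_{A ⊆ E} t^{|A|} ∏_{e ∈ A} p_e`. The product `∏_{e ∈ A} σ(u)σ(v)` equals
`∏_v σ(v)^{deg_A v}`, and summing it over all states factorizes over the vertices into
`∏_v (1 + (-1)^{deg_A v})`, which is `2^n` if `A` is even and `0` otherwise.
-/

lemma spin_eq_one_or_neg_one (x : ({1, -1} : Finset ℤ)) : (x : ℤ) = 1 ∨ (x : ℤ) = -1 := by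
  obtain ⟨x, hx⟩ := x
  simpa using hx

lemma sum_spin_pow (d : ℕ) :
    ∑ x : ({1, -1} : Finset ℤ), (x : ℤ) ^ d = if Even d then 2 else 0 := by
  rw [Finset.sum_coe_sort ({1, -1} : Finset ℤ) (· ^ d), sum_pair (by decide)]
  rcases Nat.even_or_odd d with h | h
  · simp [h, h.neg_one_pow, one_add_one_eq_two]
  · simp [Nat.not_even_iff_odd.mpr h, h.neg_one_pow]

lemma sum_prod_spin_pow (d : V → ℕ) :
    ∑ σ : V → ({1, -1} : Finset ℤ), ∏ v, (σ v : ℤ) ^ d v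
      = if ∀ v, Even (d v) then 2 ^ Fintype.card V else 0 := by
  rw [← Fintype.prod_sum (fun v (x : ({1, -1} : Finset ℤ)) => (x : ℤ) ^ d v)]
  simp_rw [sum_spin_pow]
  rw [Fintype.prod_ite_zero, prod_const, card_univ]

lemma edgeProd_eq_prod_mem (σ : V → ℤ) {e : Sym2 V} (he : ¬e.IsDiag) :
    edgeProd σ e = ∏ v ∈ univ.filter (· ∈ e), σ v := by
  induction e using Sym2.ind with
  | _ u w =>
    have huw : univ.filter (· ∈ s(u, w)) = {u, w} := by ext; simp
    rw [huw, prod_pair (by simpa using he)]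
    rfl

lemma prod_edgeProd (σ : V → ℤ) {A : Finset (Sym2 V)} (hA : ∀ e ∈ A, ¬e.IsDiag) :
    ∏ e ∈ A, edgeProd σ e = ∏ v, σ v ^ (A.filter fun e => v ∈ e).card := by
  rw [prod_congr rfl fun e he => edgeProd_eq_prod_mem σ (hA e he)]
  simp_rw [prod_filter]
  rw [prod_comm]
  simp_rw [← prod_filter, prod_const]

lemma sum_prod_edgeProd {A : Finset (Sym2 V)} (hA : ∀ e ∈ A, ¬e.IsDiag) :
    ∑ σ : V → ({1, -1} : Finset ℤ), ∏ e ∈ A, edgeProd (fun v => σ v) e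
      = if ∀ v, Even (A.filter fun e => v ∈ e).card then 2 ^ Fintype.card V else 0 := by
  simp_rw [prod_edgeProd _ hA]
  exact sum_prod_spin_pow _

lemma Real.exp_mul_eq_cosh_mul_one_add_mul_tanh (K : ℝ) {p : ℝ} (hp : p = 1 ∨ p = -1) :
    Real.exp (K * p) = Real.cosh K * (1 + p * Real.tanh K) := by
  have hcosh : Real.cosh K * (1 + p * Real.tanh K) = Real.cosh K + p * Real.sinh K := by
    rw [Real.tanh_eq_sinh_div_cosh]
    field_simp [(Real.cosh_pos K).ne']
  rw [hcosh]
  rcases hp with rfl | rfl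
  · simp [Real.cosh_add_sinh]
  · simp [← sub_eq_add_neg, Real.cosh_sub_sinh]

omit [DecidableEq V] in
lemma exp_mul_energy (G : SimpleGraph V) [DecidableRel G.Adj] (K : ℝ) {σ : V → ℤ}
    (hσ : ∀ v, σ v = 1 ∨ σ v = -1) :
    Real.exp (K * energy G σ) = Real.cosh K ^ #G.edgeFinset *
      ∑ A ∈ G.edgeFinset.powerset, ((∏ e ∈ A, edgeProd σ e : ℤ) : ℝ) * Real.tanh K ^ #A := by
  have hp (e : Sym2 V) : ((edgeProd σ e : ℤ) : ℝ) = 1 ∨ ((edgeProd σ e : ℤ) : ℝ) = -1 := by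
    induction e using Sym2.ind with
    | _ u w => rcases hσ u with hu | hu <;> rcases hσ w with hw | hw <;> simp [edgeProd, hu, hw]
  rw [energy, Int.cast_sum, mul_sum, Real.exp_sum,
    prod_congr rfl fun e _ => Real.exp_mul_eq_cosh_mul_one_add_mul_tanh K (hp e),
    prod_mul_distrib, prod_const, prod_one_add]
  simp_rw [prod_mul_distrib, prod_const, Int.cast_prod]

lemma sum_powerset_filter_pow_card {α R : Type*} [CommSemiring R] (E : Finset α) (P : Finset α → Prop)
    [DecidablePred P] (t : R) :
    ∑ A ∈ E.powerset with P A, t ^ #A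
      = ∑ i ∈ range (#E + 1), (#{A ∈ E.powerset | #A = i ∧ P A} : R) * t ^ i := by
  have hcard : ∀ A ∈ E.powerset.filter P, #A ∈ range (#E + 1) := fun A hA =>
    mem_range_succ_iff.mpr (card_le_card (mem_powerset.mp (mem_filter.mp hA).1))
  rw [← sum_fiberwise_of_maps_to hcard]
  refine sum_congr rfl fun i _ => ?_
  rw [sum_congr rfl fun A hA => by rw [(mem_filter.mp hA).2], sum_const, nsmul_eq_mul,
    filter_filter]
  simp_rw [and_comm]

/-- **van der Waerden identity.**
`Σ_σ exp(K · E(G,σ)) = 2^n (cosh K)^m Σ_i b_i (tanh K)^i`, where `b_i` is the number of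
even subgraphs of `G` with exactly `i` edges. -/
theorem van_der_waerden (G : SimpleGraph V) [DecidableRel G.Adj] (K : ℝ) :
    ∑ σ : V → ({1, -1} : Finset ℤ),
        Real.exp (K * (energy G fun v => (σ v : ℤ)))
      = 2 ^ Fintype.card V * Real.cosh K ^ G.edgeFinset.card *
          ∑ i ∈ Finset.range (G.edgeFinset.card + 1),
            (evenCount G i : ℝ) * Real.tanh K ^ i := by
  have hloopless : ∀ A ∈ G.edgeFinset.powerset, ∀ e ∈ A, ¬e.IsDiag := fun A hA e he =>
    G.not_isDiag_of_mem_edgeSet (G.mem_edgeFinset.mp (mem_powerset.mp hA he))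
  simp_rw [exp_mul_energy G K fun v => spin_eq_one_or_neg_one _, ← mul_sum]
  rw [sum_comm]
  simp_rw [← sum_mul, ← Int.cast_sum]
  rw [sum_congr rfl fun A hA => by rw [sum_prod_edgeProd (hloopless A hA)]]
  simp_rw [apply_ite (Int.cast : ℤ → ℝ), ite_mul, Int.cast_zero, zero_mul]
  rw [← sum_filter, ← mul_sum, sum_powerset_filter_pow_card]
  simp only [evenCount]
  push_cast
  ring
end

section
/- Let G=(V,E) be a finite graph and for each integer i ≥ 0 let b_i be the number of even subgraphs of G with exactly i edges. Then for every real number t, Σ_{σ: V→{±1}} Π_{uv∈E} (1 + σ(u)σ(v)·t) = 2^{|V|} · Σ_i b_i t^i. -/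
open Finset
open scoped Classical

variable {V : Type*} [Fintype V] [DecidableEq V]

lemma prod_pow_ite (σ : V → ℤ) {e : Sym2 V} (he : ¬ e.IsDiag) :
    ∏ v : V, σ v ^ (if v ∈ e then 1 else 0) = edgeProd σ e := by
  induction e using Sym2.ind with
  | _ u w =>
    have huw : u ≠ w := by simpa using he
    have hset : (Finset.univ.filter fun v => v ∈ (s(u, w) : Sym2 V)) = {u, w} := by
      ext x; simp [Sym2.mem_iff]
    calc ∏ v : V, σ v ^ (if v ∈ (s(u,w) : Sym2 V) then 1 else 0)
        = ∏ v ∈ Finset.univ.filter (fun v => v ∈ (s(u,w) : Sym2 V)), σ v := by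
          rw [Finset.prod_filter]
          exact Finset.prod_congr rfl fun v _ => by split <;> simp
      _ = σ u * σ w := by
          rw [hset, Finset.prod_insert (by simp [huw]), Finset.prod_singleton]
      _ = edgeProd σ s(u, w) := by simp [edgeProd]

lemma prod_edgeProd_eq (G : SimpleGraph V) [DecidableRel G.Adj] (σ : V → ℤ)
    (A : Finset (Sym2 V)) :
    A ⊆ G.edgeFinset →
    ∏ e ∈ A, edgeProd σ e = ∏ v : V, σ v ^ (A.filter fun e => v ∈ e).card := by
  induction A using Finset.induction_on with
  | empty => simp
  | @insert e A he ih =>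
    intro hA
    have heE : e ∈ G.edgeFinset := hA (Finset.mem_insert_self _ _)
    have hndiag : ¬ e.IsDiag :=
      G.not_isDiag_of_mem_edgeSet (SimpleGraph.mem_edgeFinset.mp heE)
    have hd : ∀ v : V, ((insert e A).filter fun f => v ∈ f).card
        = (if v ∈ e then 1 else 0) + (A.filter fun f => v ∈ f).card := by
      intro v
      rw [Finset.filter_insert]
      split
      · rw [Finset.card_insert_of_notMem (by simp [he]), Nat.add_comm]
      · simp
    rw [Finset.prod_insert he, ih (fun x hx => hA (Finset.mem_insert_of_mem hx))]
    simp_rw [hd, pow_add, Finset.prod_mul_distrib, prod_pow_ite σ hndiag]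

lemma sum_spin (d : V → ℕ) :
    (∑ σ : V → ({1, -1} : Finset ℤ), ∏ v : V, (((σ v : ℤ) : ℝ)) ^ d v)
      = if (∀ v, Even (d v)) then (2:ℝ) ^ Fintype.card V else 0 := by
  rw [← Fintype.prod_sum (fun v (y : ({1,-1} : Finset ℤ)) => (((y : ℤ) : ℝ)) ^ d v)]
  have key : ∀ v : V, (∑ y : ({1,-1} : Finset ℤ), (((y : ℤ) : ℝ)) ^ d v)
      = if Even (d v) then (2:ℝ) else 0 := by
    intro v
    rw [Finset.sum_coe_sort _ (fun y : ℤ => ((y : ℝ)) ^ d v),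
      Finset.sum_pair (by norm_num : (1:ℤ) ≠ -1)]
    by_cases h : Even (d v)
    · rw [if_pos h]; simp [h.neg_one_pow]; norm_num
    · rw [Nat.not_even_iff_odd] at h
      rw [if_neg (Nat.not_even_iff_odd.mpr h)]; simp [h.neg_one_pow]
  by_cases hall : ∀ v, Even (d v)
  · rw [if_pos hall]
    simp_rw [key]
    simp [hall]
  · rw [if_neg hall]
    push_neg at hall
    obtain ⟨v, hv⟩ := hall
    exact Finset.prod_eq_zero (Finset.mem_univ v) (by rw [key, if_neg hv])

/-- `Σ_σ Π_{uv ∈ E} (1 + σ(u)σ(v)t) = 2^{|V|} Σ_i b_i t^i`, where `b_i`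
is the number of even subgraphs of `G` with exactly `i` edges. -/
theorem sum_prod_one_add_spin_mul (G : SimpleGraph V) [DecidableRel G.Adj] (t : ℝ) :
    (∑ σ : V → ({1, -1} : Finset ℤ),
        ∏ e ∈ G.edgeFinset, (1 + (edgeProd (fun v => (σ v : ℤ)) e : ℝ) * t))
      = 2 ^ Fintype.card V *
          ∑ i ∈ Finset.range (G.edgeFinset.card + 1), (evenCount G i : ℝ) * t ^ i := by
  classical
  have expand : ∀ σ : V → ({1, -1} : Finset ℤ),
      (∏ e ∈ G.edgeFinset, (1 + (edgeProd (fun v => (σ v : ℤ)) e : ℝ) * t))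
        = ∑ A ∈ G.edgeFinset.powerset,
            (∏ v : V, (((σ v : ℤ) : ℝ)) ^ (A.filter fun e => v ∈ e).card) * t ^ A.card := by
    intro σ
    have := Finset.prod_add (fun e => (edgeProd (fun v => (σ v : ℤ)) e : ℝ) * t)
      (fun _ => (1:ℝ)) G.edgeFinset
    simp only [add_comm ((edgeProd (fun v => (σ v : ℤ)) _ : ℝ) * t) 1] at this ⊢
    rw [this]
    refine Finset.sum_congr rfl fun A hA => ?_
    rw [Finset.prod_const_one, mul_one, Finset.prod_mul_distrib, Finset.prod_const]
    congr 1
    have := prod_edgeProd_eq G (fun v => (σ v : ℤ)) A (Finset.mem_powerset.mp hA)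
    calc (∏ e ∈ A, (edgeProd (fun v => (σ v : ℤ)) e : ℝ))
        = ((∏ e ∈ A, edgeProd (fun v => (σ v : ℤ)) e : ℤ) : ℝ) := by push_cast; ring
      _ = _ := by rw [this]; push_cast; ring
  simp_rw [expand]
  rw [Finset.sum_comm]
  have step : ∀ A ∈ G.edgeFinset.powerset,
      (∑ σ : V → ({1, -1} : Finset ℤ),
        (∏ v : V, (((σ v : ℤ) : ℝ)) ^ (A.filter fun e => v ∈ e).card) * t ^ A.card)
      = (if (∀ v : V, Even (A.filter fun e => v ∈ e).card) then (2:ℝ) ^ Fintype.card V else 0)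
          * t ^ A.card := by
    intro A _
    rw [← Finset.sum_mul, sum_spin]
  rw [Finset.sum_congr rfl step]
  set S := G.edgeFinset.powerset.filter
    (fun A => ∀ v : V, Even (A.filter fun e => v ∈ e).card) with hS
  simp_rw [ite_mul, zero_mul]
  rw [← Finset.sum_filter, ← hS, ← Finset.mul_sum]
  congr 1
  have hmaps : ∀ A ∈ S, A.card ∈ Finset.range (G.edgeFinset.card + 1) := by
    intro A hA
    rw [hS, Finset.mem_filter, Finset.mem_powerset] at hA
    exact Finset.mem_range.mpr (Nat.lt_succ_of_le (Finset.card_le_card hA.1))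
  rw [← Finset.sum_fiberwise_of_maps_to hmaps (fun A => t ^ A.card)]
  refine Finset.sum_congr rfl fun i hi => ?_
  have hc : ∀ A ∈ S.filter (fun A => A.card = i), t ^ A.card = t ^ i := by
    intro A hA
    rw [(Finset.mem_filter.mp hA).2]
  rw [Finset.sum_congr rfl hc, Finset.sum_const, nsmul_eq_mul]
  congr 1
  rw [hS, Finset.filter_filter, evenCount]
  have : (G.edgeFinset.powerset.filter fun a =>
        (∀ v : V, Even (a.filter fun e => v ∈ e).card) ∧ a.card = i)
      = G.edgeFinset.powerset.filter fun A =>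
        A.card = i ∧ ∀ v : V, Even (A.filter fun e => v ∈ e).card :=
    Finset.filter_congr fun A _ => and_comm
  rw [this]
end

section
/- Let b, β: ℕ⁺ → ℚ and β̂: ℕ⁺ → ℚ be sequences such that for every positive integer i, i·b_i = Σ_{t | i} t·β_t and i·b_i = Σ_{r·s = i} r·(β̂_r)^s (the second sum over all ordered pairs of positive integers (r,s) with rs = i). Then for every positive integer i, i·β_i = Σ_{r·s·t = i} μ(r)·t·(β̂_t)^s, where μ is the Möbius function and the sum is over all ordered triples of positive integers (r,s,t) with rst = i. -/
open Finset

/-- If for every positive integer `i` we have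
`i·b_i = Σ_{t ∣ i} t·β_t` and `i·b_i = Σ_{rs = i} r·(β̂_r)^s`, then for every positive
integer `i`, `i·β_i = Σ_{rst = i} μ(r)·t·(β̂_t)^s`, where `μ` is the Möbius function.
(The triple sum is written as `Σ_{r ∣ i} μ(r) Σ_{t ∣ i/r} t·(β̂_t)^{(i/r)/t}`.) -/
theorem moebius_triangular_relation (b β βh : ℕ → ℚ)
    (h1 : ∀ i : ℕ, 0 < i → (i : ℚ) * b i = ∑ t ∈ i.divisors, (t : ℚ) * β t)
    (h2 : ∀ i : ℕ, 0 < i → (i : ℚ) * b i = ∑ r ∈ i.divisors, (r : ℚ) * βh r ^ (i / r)) :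
    ∀ i : ℕ, 0 < i →
      (i : ℚ) * β i
        = ∑ r ∈ i.divisors, ((ArithmeticFunction.moebius r : ℤ) : ℚ) *
            ∑ t ∈ (i / r).divisors, (t : ℚ) * βh t ^ (i / r / t) := by
  have key := (ArithmeticFunction.sum_eq_iff_sum_mul_moebius_eq
    (f := fun t => (t : ℚ) * β t) (g := fun n => (n : ℚ) * b n)).mp
    (fun n hn => (h1 n hn).symm)
  intro i hi
  rw [← key i hi, ← Nat.sum_divisorsAntidiagonal
    (fun r s => ((ArithmeticFunction.moebius r : ℤ) : ℚ) *
      ∑ t ∈ s.divisors, (t : ℚ) * βh t ^ (s / t))]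
  refine Finset.sum_congr rfl fun x hx => ?_
  have hpos := Nat.pos_of_mem_divisors (Nat.snd_mem_divisors_of_mem_antidiagonal hx)
  rw [h2 x.2 hpos]
end
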